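/- Lemma D.2 (intersections of facets, type D): Let I, J ∈ 𝔉_{D_n}. (1) If |I| ≠ n or |J| ≠ n, then F(I) ∩ F(J) ≠ ∅ if and only if I ⊆ J or J ⊆ I. (2) If |I| = |J| = n, then F(I) ∩ F(J) ≠ ∅ if and only if I = J or I = (J \ {j}) ∪ {j̄} for some j ∈ J. Equivalently, F(I) ∩ F(J) = ∅ if and only if I ⊄ J, J ⊄ I and |I ∩ J| ≤ n−2. -/

import Mathlib

/-!
Type `D_n` setup.  Coordinates are 0-indexed: the paper's index
`i ∈ {1, …, 2n}` corresponds to `i - 1 : Fin (2*n)`, and the bar involution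
`ī = 2n + 1 − i` corresponds to `Fin.rev`.
-/

noncomputable section

namespace WeightD

/-- The ambient space `E = {x ∈ ℝ^{2n} : x_i + x_{ī} = 0 for i ∈ [n]}`. -/
def E (n : ℕ) : Set (Fin (2 * n) → ℝ) :=
  {x | ∀ i : Fin (2 * n), (i : ℕ) < n → x i + x i.rev = 0}

/-- A signed subset: `|I ∩ {i, ī}| ≤ 1` for all `i ∈ [n]`, and `I` nonempty. -/
def Signed (n : ℕ) (I : Finset (Fin (2 * n))) : Prop :=
  I.Nonempty ∧ ∀ i : Fin (2 * n), (i : ℕ) < n → ¬(i ∈ I ∧ i.rev ∈ I)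

/-- The group `W_{D_n}` of even-signed permutations: signed permutations `u`
such that `|{u(1), …, u(n)} ∩ \overline{[n]}|` is even. -/
def WD (n : ℕ) : Set (Equiv.Perm (Fin (2 * n))) :=
  {u | (∀ i, u i.rev = (u i).rev) ∧
    Even ((Finset.univ.filter
      (fun i : Fin (2 * n) => (i : ℕ) < n ∧ n ≤ ((u i : Fin (2 * n)) : ℕ))).card)}

/-- The vertex of the weight polytope corresponding to `u`. -/
def ptD (n : ℕ) (a : Fin (2 * n) → ℝ) (u : Equiv.Perm (Fin (2 * n))) :
    Fin (2 * n) → ℝ :=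
  fun i => a (u i)

/-- The weight polytope `P_{D_n}`: convex hull of the `W_{D_n}`-orbit of `a`. -/
def PD (n : ℕ) (a : Fin (2 * n) → ℝ) : Set (Fin (2 * n) → ℝ) :=
  convexHull ℝ {p | ∃ u ∈ WD n, p = ptD n a u}

/-- The right-hand side `Σ_{i ∈ 𝓘} a_i` in the definition of the facet `F(I)`:
`𝓘 = [n-1] ∪ {n̄}` if `|I| = n` and `|I ∩ \overline{[n]}|` is odd, and
`𝓘 = [|I|]` otherwise (0-indexed, `n̄` is the coordinate `n : Fin (2n)`). -/
def targetD (n : ℕ) (hn : 3 ≤ n) (a : Fin (2 * n) → ℝ)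
    (I : Finset (Fin (2 * n))) : ℝ :=
  if I.card = n ∧ Odd ((I.filter (fun i : Fin (2 * n) => n ≤ (i : ℕ))).card) then
    (∑ i ∈ Finset.univ.filter (fun i : Fin (2 * n) => (i : ℕ) < n - 1), a i) +
      a ⟨n, by omega⟩
  else
    ∑ i ∈ Finset.univ.filter (fun i : Fin (2 * n) => (i : ℕ) < I.card), a i

/-- The facet `F(I)` for `I ∈ 𝔉_{D_n}`. -/
def FD (n : ℕ) (hn : 3 ≤ n) (a : Fin (2 * n) → ℝ) (I : Finset (Fin (2 * n))) :
    Set (Fin (2 * n) → ℝ) :=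
  {x ∈ PD n a | ∑ i ∈ I, x i = targetD n hn a I}

end WeightD

namespace WeightD

/-! ### Auxiliary definitions -/


/-- The "segment" `{0, …, k-1}` inside `Fin (2n)`. -/
def seg (n : ℕ) (k : ℕ) : Finset (Fin (2 * n)) :=
  Finset.univ.filter (fun i : Fin (2 * n) => (i : ℕ) < k)

/-- The optimal position set for a signed set `I`. -/
def LD (n : ℕ) (hn : 3 ≤ n) (I : Finset (Fin (2 * n))) : Finset (Fin (2 * n)) :=
  if I.card = n ∧ Odd ((I.filter (fun i : Fin (2 * n) => n ≤ (i : ℕ))).card) then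
    insert (⟨n, by omega⟩ : Fin (2 * n)) (seg n (n - 1))
  else
    seg n I.card

/-- Pair representative in `Fin n`. -/
def pr (n : ℕ) (i : Fin (2 * n)) : Fin n :=
  if h : (i : ℕ) < n then ⟨i, h⟩ else ⟨2 * n - 1 - i, by omega⟩

/-- Embedding of `Fin n` as the first half of `Fin (2n)`. -/
def emb (n : ℕ) (p : Fin n) : Fin (2 * n) := ⟨p, by omega⟩

/-- The element of the pair `p` belonging to `M` (if any; the positive one
by default). -/
def belem (n : ℕ) (M : Finset (Fin (2 * n))) (p : Fin n) : Fin (2 * n) :=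
  if emb n p ∈ M then emb n p else (emb n p).rev

/-- The signed-permutation map built from a pair permutation `σ` and a sign
vector `b`. -/
def sp (n : ℕ) (σ : Equiv.Perm (Fin n)) (b : Fin n → Bool) :
    Fin (2 * n) → Fin (2 * n) :=
  fun i => if (decide ((i : ℕ) < n)) = b (pr n i) then (emb n (σ (pr n i))).rev
    else emb n (σ (pr n i))

end WeightD

namespace WeightD

variable {n : ℕ}

lemma val_rev (i : Fin (2 * n)) : (i.rev : ℕ) = 2 * n - 1 - i := by
  rw [Fin.val_rev]; omega

lemma rev_lt_iff (i : Fin (2 * n)) : (i.rev : ℕ) < n ↔ ¬ ((i : ℕ) < n) := by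
  have := i.isLt
  rw [val_rev]; omega

@[simp] lemma pr_emb (p : Fin n) : pr n (emb n p) = p := by
  have := p.isLt
  simp only [pr, emb]
  simp [this]

@[simp] lemma emb_val (p : Fin n) : ((emb n p : Fin (2*n)) : ℕ) = p := rfl

@[simp] lemma pr_rev (i : Fin (2 * n)) : pr n i.rev = pr n i := by
  have hi := i.isLt
  by_cases h : (i : ℕ) < n
  · have h' : ¬ ((i.rev : ℕ) < n) := by rw [rev_lt_iff]; simp [h]
    simp only [pr, dif_pos h, dif_neg h']
    ext; simp [val_rev]; omega
  · have h' : (i.rev : ℕ) < n := (rev_lt_iff i).2 h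
    simp only [pr, dif_pos h', dif_neg h]
    ext; simp [val_rev]; omega

lemma rev_emb_val (p : Fin n) : (((emb n p).rev : Fin (2*n)) : ℕ) = 2 * n - 1 - p := by
  rw [val_rev]; rfl

lemma pr_eq_cases {i j : Fin (2 * n)} (h : pr n i = pr n j) : j = i ∨ j = i.rev := by
  have hi := i.isLt; have hj := j.isLt
  by_cases h1 : (i : ℕ) < n <;> by_cases h2 : (j : ℕ) < n <;>
    simp only [pr, dif_pos, dif_neg, h1, h2] at h
  · left; ext; simpa using h.symm
  · right; have := congrArg Fin.val h; simp at this; ext; rw [val_rev]; omega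
  · right; have := congrArg Fin.val h; simp at this; ext; rw [val_rev]; omega
  · left; have := congrArg Fin.val h; simp at this; ext; omega

lemma eq_emb_or_rev (i : Fin (2 * n)) : i = emb n (pr n i) ∨ i = (emb n (pr n i)).rev := by
  have := pr_eq_cases (i := emb n (pr n i)) (j := i) (by simp)
  tauto

lemma signed_unique {K : Finset (Fin (2*n))} (hK : Signed n K) {i j : Fin (2*n)}
    (hi : i ∈ K) (hj : j ∈ K) (hp : pr n i = pr n j) : i = j := by
  rcases pr_eq_cases hp with h | h
  · exact h.symm
  · subst h
    by_cases h1 : (i : ℕ) < n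
    · exact absurd ⟨hi, hj⟩ (hK.2 i h1)
    · have h2 : ((i.rev : Fin (2*n)) : ℕ) < n := (rev_lt_iff i).2 h1
      have := hK.2 i.rev h2
      rw [Fin.rev_rev] at this
      exact absurd ⟨hj, hi⟩ this

lemma pr_injOn {K : Finset (Fin (2*n))} (hK : Signed n K) :
    Set.InjOn (pr n) K := fun i hi j hj h => signed_unique hK hi hj h

lemma card_pairs {K : Finset (Fin (2*n))} (hK : Signed n K) :
    (K.image (pr n)).card = K.card :=
  Finset.card_image_of_injOn (pr_injOn hK)

lemma signed_card_le {K : Finset (Fin (2*n))} (hK : Signed n K) : K.card ≤ n := by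
  have := card_pairs hK
  have h2 : (K.image (pr n)).card ≤ Fintype.card (Fin n) := Finset.card_le_univ _
  simp at h2; omega

lemma belem_pr {M : Finset (Fin (2*n))} (p : Fin n) : pr n (belem n M p) = p := by
  unfold belem; split <;> simp

lemma belem_mem {M : Finset (Fin (2*n))} {p : Fin n}
    (hp : p ∈ M.image (pr n)) : belem n M p ∈ M := by
  rcases Finset.mem_image.1 hp with ⟨i, hi, hpi⟩
  unfold belem
  split
  · assumption
  · rcases eq_emb_or_rev i with h | h
    · exact absurd (hpi ▸ h ▸ hi) (by assumption)
    · have : i = (emb n p).rev := by rw [h, hpi]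
      exact this ▸ hi

lemma belem_eq_of_mem {M : Finset (Fin (2*n))} (hM : Signed n M) {i : Fin (2*n)}
    (hi : i ∈ M) : belem n M (pr n i) = i :=
  signed_unique hM (belem_mem (Finset.mem_image_of_mem _ hi)) hi (belem_pr _)

lemma belem_subset {M M' : Finset (Fin (2*n))} (hM : Signed n M) (hMM : M' ⊆ M)
    {p : Fin n} (hp : p ∈ M'.image (pr n)) : belem n M p = belem n M' p := by
  have h1 : belem n M' p ∈ M := hMM (belem_mem hp)
  have h2 : belem n M p ∈ M := belem_mem (Finset.image_subset_image hMM hp)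
  exact signed_unique hM h2 h1 (by rw [belem_pr, belem_pr])

end WeightD
namespace WeightD

variable {n : ℕ}

lemma decide_rev_lt (i : Fin (2 * n)) :
    decide ((i.rev : ℕ) < n) = ! decide ((i : ℕ) < n) := by
  have := i.isLt
  by_cases h : (i : ℕ) < n <;> simp [h, val_rev] <;> omega

lemma cond_rev (b : Fin n → Bool) (i : Fin (2*n)) :
    (decide ((i.rev : ℕ) < n) = b (pr n i)) ↔ ¬ (decide ((i : ℕ) < n) = b (pr n i)) := by
  rw [decide_rev_lt]
  cases b (pr n i) <;> cases hd : decide ((i : ℕ) < n) <;> simp [hd]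

lemma emb_ne_rev (q p : Fin n) : (emb n q).rev ≠ emb n p := by
  intro h
  have := congrArg Fin.val h
  rw [val_rev] at this
  simp only [emb_val] at this
  have := q.isLt; have := p.isLt
  omega

lemma pr_sp (σ : Equiv.Perm (Fin n)) (b : Fin n → Bool) (i : Fin (2*n)) :
    pr n (sp n σ b i) = σ (pr n i) := by
  unfold sp; split <;> simp

lemma sp_rev (σ : Equiv.Perm (Fin n)) (b : Fin n → Bool) (i : Fin (2*n)) :
    sp n σ b i.rev = (sp n σ b i).rev := by
  unfold sp
  rw [pr_rev]
  by_cases hc : decide ((i : ℕ) < n) = b (pr n i)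
  · rw [if_pos hc, if_neg ((cond_rev b i).not.2 (by simpa using hc)), Fin.rev_rev]
  · rw [if_neg hc, if_pos ((cond_rev b i).2 hc)]

lemma sp_injective (σ : Equiv.Perm (Fin n)) (b : Fin n → Bool) :
    Function.Injective (sp n σ b) := by
  intro i j h
  have hp : pr n i = pr n j := by
    have := congrArg (pr n) h
    rw [pr_sp, pr_sp] at this
    exact σ.injective this
  rcases pr_eq_cases hp with rfl | rfl
  · rfl
  · exfalso
    rw [sp_rev] at h
    rcases eq_emb_or_rev (sp n σ b i) with he | he
    · rw [he] at h
      exact emb_ne_rev _ _ h.symm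
    · rw [he, Fin.rev_rev] at h
      exact emb_ne_rev _ _ h

/-- The signed permutation as an `Equiv.Perm`. -/
def spPerm (n : ℕ) (σ : Equiv.Perm (Fin n)) (b : Fin n → Bool) :
    Equiv.Perm (Fin (2*n)) :=
  Equiv.ofBijective _ (Finite.injective_iff_bijective.1 (sp_injective σ b))

lemma spPerm_apply (σ : Equiv.Perm (Fin n)) (b : Fin n → Bool) (i : Fin (2*n)) :
    spPerm n σ b i = sp n σ b i := rfl

lemma spPerm_rev (σ : Equiv.Perm (Fin n)) (b : Fin n → Bool) (i : Fin (2*n)) :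
    spPerm n σ b i.rev = (spPerm n σ b i).rev := sp_rev σ b i

/-- Core mapping property of `sp`. -/
lemma sp_belem (σ : Equiv.Perm (Fin n)) (b : Fin n → Bool)
    (J M : Finset (Fin (2*n))) (p : Fin n)
    (hb : b p = ((decide ((belem n J p : Fin (2*n)) < (n:ℕ))) ==
      (decide (n ≤ ((belem n M (σ p) : Fin (2*n)) : ℕ))))) :
    sp n σ b (belem n J p) = belem n M (σ p) := by
  have hq := (σ p).isLt
  have hprb : pr n (belem n J p) = p := belem_pr p
  unfold sp
  rw [hprb]
  by_cases hM : emb n (σ p) ∈ M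
  · have hMval : ¬ (n ≤ ((belem n M (σ p) : Fin (2*n)) : ℕ)) := by
      unfold belem; rw [if_pos hM]; simp only [emb_val]; omega
    have hval : ¬ ((decide (((belem n J p : Fin (2*n)) : ℕ) < n)) = b p) := by
      rw [hb]
      simp only [hMval]
      cases hd : decide (((belem n J p : Fin (2*n)) : ℕ) < n) <;> simp
    rw [if_neg (by simpa using hval)]
    unfold belem; rw [if_pos hM]
  · have hMval : n ≤ ((belem n M (σ p) : Fin (2*n)) : ℕ) := by
      unfold belem; rw [if_neg hM, val_rev]; simp; omega
    have hval : (decide (((belem n J p : Fin (2*n)) : ℕ) < n)) = b p := by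
      rw [hb]
      simp only [hMval]
      cases hd : decide (((belem n J p : Fin (2*n)) : ℕ) < n) <;> simp
    rw [if_pos (by simpa using hval)]
    unfold belem; rw [if_neg hM]

/-- Flip count of `spPerm`. -/
lemma spPerm_flipcount (σ : Equiv.Perm (Fin n)) (b : Fin n → Bool) :
    (Finset.univ.filter (fun i : Fin (2*n) =>
        (i : ℕ) < n ∧ n ≤ ((spPerm n σ b i : Fin (2*n)) : ℕ))).card
      = (Finset.univ.filter (fun p : Fin n => b p = true)).card := by
  apply Finset.card_bij (fun i _ => pr n i)
  · intro i hi
    simp only [Finset.mem_filter, Finset.mem_univ, true_and] at hi ⊢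
    obtain ⟨h1, h2⟩ := hi
    rw [spPerm_apply] at h2
    unfold sp at h2
    by_cases hc : decide ((i : ℕ) < n) = b (pr n i)
    · simpa [h1] using hc.symm
    · rw [if_neg hc] at h2
      simp only [emb_val] at h2
      have := (σ (pr n i)).isLt
      omega
  · intro i hi j hj h
    simp only [Finset.mem_filter, Finset.mem_univ, true_and] at hi hj
    rcases pr_eq_cases h with rfl | rfl
    · rfl
    · exfalso; rw [rev_lt_iff] at hj; exact absurd hi.1 hj.1
  · intro p hp
    simp only [Finset.mem_filter, Finset.mem_univ, true_and] at hp
    refine ⟨emb n p, ?_, by simp⟩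
    simp only [Finset.mem_filter, Finset.mem_univ, true_and]
    have hpn := p.isLt
    constructor
    · simpa using hpn
    · rw [spPerm_apply]
      unfold sp
      rw [pr_emb]
      have : decide (((emb n p : Fin (2*n)) : ℕ) < n) = b p := by
        simpa using hp
      rw [if_pos this, val_rev]
      have := (σ p).isLt
      simp only [emb_val]
      omega

end WeightD
namespace WeightD

variable {n : ℕ}

lemma mem_seg {k : ℕ} {i : Fin (2*n)} : i ∈ seg n k ↔ (i : ℕ) < k := by
  simp [seg]

lemma seg_card {k : ℕ} (hk : k ≤ 2*n) : (seg n k).card = k := by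
  have : seg n k = (Finset.range k).attachFin (fun m hm => lt_of_lt_of_le (Finset.mem_range.1 hm) hk) := by
    ext i
    simp [seg, Finset.mem_attachFin]
  rw [this, Finset.card_attachFin, Finset.card_range]

lemma seg_eq_insert {k : ℕ} (h1 : 1 ≤ k) (hk : k ≤ 2*n) :
    seg n k = insert (⟨k-1, by omega⟩ : Fin (2*n)) (seg n (k-1)) := by
  ext i
  simp only [mem_seg, Finset.mem_insert, Fin.ext_iff]
  omega

lemma not_mem_seg_self {k : ℕ} (hk : k < 2*n) : (⟨k, hk⟩ : Fin (2*n)) ∉ seg n k := by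
  simp [mem_seg]

section Sums

variable {a : Fin (2*n) → ℝ} (hA : ∀ i j : Fin (2*n), (i:ℕ) < (j:ℕ) → a i < a j)

include hA

lemma amono_le {i j : Fin (2*n)} (h : (i:ℕ) ≤ (j:ℕ)) : a i ≤ a j := by
  rcases eq_or_lt_of_le h with h | h
  · have : i = j := Fin.ext h
    exact this ▸ le_refl _
  · exact le_of_lt (hA _ _ h)

/-- Core minimality: the sum over the first `|T|` coordinates is minimal,
strictly unless `T` is that segment. -/
lemma sum_seg_le (T : Finset (Fin (2*n))) :
    (∑ i ∈ seg n T.card, a i ≤ ∑ i ∈ T, a i) ∧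
    (T ≠ seg n T.card → ∑ i ∈ seg n T.card, a i < ∑ i ∈ T, a i) := by
  induction T using Finset.strongInductionOn with
  | _ T ih =>
    rcases T.eq_empty_or_nonempty with rfl | hne
    · have : seg n (0:ℕ) = (∅ : Finset (Fin (2*n))) := by
        ext i; simp [mem_seg]
      simp only [Finset.card_empty, this]
      exact ⟨le_refl _, fun h => absurd rfl h⟩
    · obtain ⟨M, hMmem, hMmax⟩ : ∃ M ∈ T, ∀ t ∈ T, (t:ℕ) ≤ (M:ℕ) := by
        refine ⟨T.max' hne, T.max'_mem hne, fun t ht => ?_⟩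
        have := T.le_max' t ht; rwa [Fin.le_def] at this
      have hcpos : 1 ≤ T.card := Finset.card_pos.2 hne
      have hcle : T.card ≤ (M:ℕ) + 1 := by
        have hsub : T ⊆ seg n ((M:ℕ)+1) := by
          intro t ht
          rw [mem_seg]
          have := hMmax t ht
          omega
        have := Finset.card_le_card hsub
        rwa [seg_card (by have := M.isLt; omega)] at this
      have hc2n : T.card ≤ 2*n := by have := M.isLt; omega
      have hck : T.card - 1 < 2*n := by omega
      have herase : (T.erase M).card = T.card - 1 := by
        rw [Finset.card_erase_of_mem hMmem]
      have hihfull := ih (T.erase M) (Finset.erase_ssubset hMmem)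
      rw [herase] at hihfull
      have hsegsplit : ∑ i ∈ seg n T.card, a i
          = a ⟨T.card - 1, hck⟩ + ∑ i ∈ seg n (T.card - 1), a i := by
        rw [seg_eq_insert hcpos hc2n, Finset.sum_insert (not_mem_seg_self hck)]
      have hTsplit : ∑ i ∈ T, a i = a M + ∑ i ∈ T.erase M, a i := by
        rw [add_comm, Finset.sum_erase_add _ _ hMmem]
      have haM : a ⟨T.card - 1, hck⟩ ≤ a M := amono_le hA (by simp; omega)
      constructor
      · rw [hsegsplit, hTsplit]
        exact add_le_add haM hihfull.1
      · intro hT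
        rw [hsegsplit, hTsplit]
        by_cases hMeq : (M:ℕ) = T.card - 1
        · have hMeq' : M = ⟨T.card - 1, hck⟩ := Fin.ext hMeq
          have hne2 : T.erase M ≠ seg n (T.card - 1) := by
            intro he
            apply hT
            have h3 : T = insert M (T.erase M) := (Finset.insert_erase hMmem).symm
            rw [he, hMeq'] at h3
            rw [seg_eq_insert hcpos hc2n]
            exact h3
          have hstrict := hihfull.2 hne2
          have haMeq : a M = a ⟨T.card - 1, hck⟩ := congrArg a hMeq'
          linarith
        · have hlt : a ⟨T.card - 1, hck⟩ < a M := hA _ _ (by simp; omega)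
          linarith [hihfull.1]

/-- Minimality in the odd case. -/
lemma sum_odd_le (hn : 1 ≤ n) (T : Finset (Fin (2*n))) (hcard : T.card = n)
    (hneg : ∃ t ∈ T, n ≤ (t:ℕ)) :
    ((∑ i ∈ seg n (n-1), a i) + a ⟨n, by omega⟩ ≤ ∑ i ∈ T, a i) ∧
    (T ≠ insert (⟨n, by omega⟩ : Fin (2*n)) (seg n (n-1)) →
      (∑ i ∈ seg n (n-1), a i) + a ⟨n, by omega⟩ < ∑ i ∈ T, a i) := by
  have hne : T.Nonempty := by
    rcases hneg with ⟨t, ht, _⟩; exact ⟨t, ht⟩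
  obtain ⟨M, hMmem, hMmax⟩ : ∃ M ∈ T, ∀ t ∈ T, (t:ℕ) ≤ (M:ℕ) := by
    refine ⟨T.max' hne, T.max'_mem hne, fun t ht => ?_⟩
    have := T.le_max' t ht; rwa [Fin.le_def] at this
  have hMge : n ≤ (M:ℕ) := by
    rcases hneg with ⟨t, ht, htn⟩
    have := hMmax t ht
    omega
  have herase : (T.erase M).card = n - 1 := by
    rw [Finset.card_erase_of_mem hMmem, hcard]
  have hih := sum_seg_le hA (T.erase M)
  rw [herase] at hih
  have hTsplit : ∑ i ∈ T, a i = a M + ∑ i ∈ T.erase M, a i := by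
    rw [add_comm, Finset.sum_erase_add _ _ hMmem]
  have haM : a ⟨n, by omega⟩ ≤ a M := amono_le hA (by simpa using hMge)
  constructor
  · rw [hTsplit]
    linarith [hih.1]
  · intro hT
    rw [hTsplit]
    by_cases hMeq : (M:ℕ) = n
    · have hMeq' : M = ⟨n, by omega⟩ := Fin.ext hMeq
      have hne2 : T.erase M ≠ seg n (n - 1) := by
        intro he
        apply hT
        have h3 : T = insert M (T.erase M) := (Finset.insert_erase hMmem).symm
        rw [he, hMeq'] at h3
        exact h3
      have hstrict := hih.2 hne2
      have haMeq : a M = a ⟨n, by omega⟩ := congrArg a hMeq'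
      linarith
    · have hlt : a ⟨n, by omega⟩ < a M := hA _ _ (by simp; omega)
      linarith [hih.1]

end Sums

end WeightD
namespace WeightD

variable {n : ℕ}

/-- Indicator of the "negative" half, with values in `ZMod 2`. -/
def chi (n : ℕ) : Fin (2*n) → ZMod 2 := fun i => if n ≤ (i:ℕ) then 1 else 0

lemma even_iff_zmod (c : ℕ) : Even c ↔ (c : ZMod 2) = 0 := by
  rw [ZMod.natCast_eq_zero_iff]
  exact even_iff_two_dvd

lemma odd_iff_zmod (c : ℕ) : Odd c ↔ (c : ZMod 2) = 1 := by
  rw [← Nat.not_even_iff_odd, even_iff_zmod]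
  have : ∀ x : ZMod 2, ¬ (x = 0) ↔ x = 1 := by decide
  exact this _

lemma sum_chi (T : Finset (Fin (2*n))) :
    ∑ i ∈ T, chi n i = (((T.filter (fun i : Fin (2*n) => n ≤ (i:ℕ))).card : ℕ) : ZMod 2) := by
  rw [← Finset.sum_boole]
  rfl

lemma chi_rev (i : Fin (2*n)) : chi n i.rev = chi n i + 1 := by
  unfold chi
  by_cases h : (i : ℕ) < n
  · have h' : ¬ ((i.rev : ℕ) < n) := by rw [rev_lt_iff]; simp [h]
    rw [if_pos (by omega), if_neg (by omega)]
    decide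
  · have h' : (i.rev : ℕ) < n := (rev_lt_iff i).2 h
    rw [if_neg (by omega), if_pos (by omega)]
    decide

lemma zmod2_cancel {A B : ZMod 2} (h : A + B = 0) : A = B := by
  revert h; revert A B; decide

/-- Parity transport: the image of a full signed set under an even-signed
permutation has the same sign parity. -/
lemma eps_image {u : Equiv.Perm (Fin (2*n))} (hu : u ∈ WD n)
    {I : Finset (Fin (2*n))} (hI : Signed n I) (hIc : I.card = n) :
    ((((I.image u).filter (fun i : Fin (2*n) => n ≤ (i:ℕ))).card : ℕ) : ZMod 2)
      = (((I.filter (fun i : Fin (2*n) => n ≤ (i:ℕ))).card : ℕ) : ZMod 2) := by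
  rw [← sum_chi, ← sum_chi]
  rw [Finset.sum_image (fun x _ y _ h => u.injective h)]
  have key : ∑ i ∈ I, (chi n (u i) + chi n i) = 0 := by
    have hrevinv : ∀ i : Fin (2*n), chi n (u i.rev) + chi n i.rev
        = chi n (u i) + chi n i := by
      intro i
      rw [hu.1 i, chi_rev, chi_rev]
      have h2 : (2 : ZMod 2) = 0 := by decide
      linear_combination h2
    have hstep : ∀ i ∈ I, chi n (u i) + chi n i
        = chi n (u (emb n (pr n i))) + chi n (emb n (pr n i)) := by
      intro i _
      rcases eq_emb_or_rev i with h | h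
      · rw [← h]
      · conv_lhs => rw [h, hrevinv]
    rw [Finset.sum_congr rfl hstep]
    have himg : I.image (pr n) = Finset.univ := by
      apply Finset.eq_univ_of_card
      rw [card_pairs hI, hIc, Fintype.card_fin]
    have hre : ∑ i ∈ I, (chi n (u (emb n (pr n i))) + chi n (emb n (pr n i)))
        = ∑ p ∈ I.image (pr n), (chi n (u (emb n p)) + chi n (emb n p)) := by
      rw [Finset.sum_image (fun x hx y hy h => pr_injOn hI hx hy h)]
    rw [hre, himg]
    have h0 : ∀ p : Fin n, chi n (emb n p) = 0 := by
      intro p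
      unfold chi
      rw [if_neg (by simp [emb])]
    rw [Finset.sum_add_distrib]
    have h2 : ∑ p : Fin n, chi n (emb n p) = 0 :=
      Finset.sum_eq_zero (fun p _ => h0 p)
    rw [h2, add_zero]
    -- remaining: ∑ p, chi n (u (emb n p)) = 0 using evenness
    have hcount : ∑ p : Fin n, chi n (u (emb n p))
        = (((Finset.univ.filter (fun p : Fin n => n ≤ ((u (emb n p) : Fin (2*n)) : ℕ))).card : ℕ) : ZMod 2) := by
      rw [← Finset.sum_boole]
      rfl
    rw [hcount]
    have hbij : (Finset.univ.filter (fun p : Fin n => n ≤ ((u (emb n p) : Fin (2*n)) : ℕ))).card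
        = (Finset.univ.filter (fun i : Fin (2*n) => (i : ℕ) < n ∧ n ≤ ((u i : Fin (2*n)) : ℕ))).card := by
      apply Finset.card_bij (fun p _ => emb n p)
      · intro p hp
        simp only [Finset.mem_filter, Finset.mem_univ, true_and] at hp ⊢
        exact ⟨p.isLt, hp⟩
      · intro p _ q _ h
        have := congrArg Fin.val h
        exact Fin.ext (by simpa using this)
      · intro i hi
        simp only [Finset.mem_filter, Finset.mem_univ, true_and] at hi
        refine ⟨⟨(i:ℕ), hi.1⟩, ?_, ?_⟩
        · simp only [Finset.mem_filter, Finset.mem_univ, true_and]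
          have : emb n ⟨(i:ℕ), hi.1⟩ = i := Fin.ext rfl
          rw [this]
          exact hi.2
        · exact Fin.ext rfl
    rw [hbij]
    exact (even_iff_zmod _).1 hu.2
  have hsplit : ∑ i ∈ I, chi n (u i) + ∑ i ∈ I, chi n i
      = ∑ i ∈ I, (chi n (u i) + chi n i) := Finset.sum_add_distrib.symm
  exact zmod2_cancel (hsplit.trans key)

end WeightD
namespace WeightD

variable {n : ℕ}

lemma LD_card (hn : 3 ≤ n) {I : Finset (Fin (2*n))} (hIle : I.card ≤ n) :
    (LD n hn I).card = I.card := by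
  unfold LD
  split
  · next h =>
    rw [Finset.card_insert_of_notMem (by simp [mem_seg]), seg_card (by omega)]
    omega
  · exact seg_card (by omega)

lemma sum_LD (hn : 3 ≤ n) (a : Fin (2*n) → ℝ) (I : Finset (Fin (2*n))) :
    targetD n hn a I = ∑ i ∈ LD n hn I, a i := by
  unfold targetD LD
  split
  · rw [Finset.sum_insert (by simp [mem_seg])]
    rw [add_comm]
    rfl
  · rfl

/-- Minimality of the sum over `LD` among candidate position sets. -/
lemma LD_min (hn : 3 ≤ n) {a : Fin (2*n) → ℝ}
    (hA : ∀ i j : Fin (2*n), (i:ℕ) < (j:ℕ) → a i < a j)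
    {I T : Finset (Fin (2*n))} (hTcard : T.card = I.card)
    (hpar : I.card = n →
      (((T.filter (fun i : Fin (2*n) => n ≤ (i:ℕ))).card : ℕ) : ZMod 2)
        = (((I.filter (fun i : Fin (2*n) => n ≤ (i:ℕ))).card : ℕ) : ZMod 2)) :
    (∑ i ∈ LD n hn I, a i ≤ ∑ i ∈ T, a i) ∧
    (T ≠ LD n hn I → ∑ i ∈ LD n hn I, a i < ∑ i ∈ T, a i) := by
  unfold LD
  split
  · next hcond =>
    obtain ⟨hIc, hodd⟩ := hcond
    have hoddT : Odd ((T.filter (fun i : Fin (2*n) => n ≤ (i:ℕ))).card) := by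
      rw [odd_iff_zmod, hpar hIc, ← odd_iff_zmod]
      exact hodd
    have hneg : ∃ t ∈ T, n ≤ (t:ℕ) := by
      have hpos : (T.filter (fun i : Fin (2*n) => n ≤ (i:ℕ))).card ≠ 0 := by
        intro h0; rw [h0] at hoddT; simp [Nat.odd_iff] at hoddT
      rcases Finset.card_pos.1 (Nat.pos_of_ne_zero hpos) with ⟨t, ht⟩
      rcases Finset.mem_filter.1 ht with ⟨ht1, ht2⟩
      exact ⟨t, ht1, ht2⟩
    have hkey := sum_odd_le hA (by omega : 1 ≤ n) T (by omega) hneg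
    have hins : ∑ i ∈ insert (⟨n, by omega⟩ : Fin (2*n)) (seg n (n-1)), a i
        = (∑ i ∈ seg n (n-1), a i) + a ⟨n, by omega⟩ := by
      rw [Finset.sum_insert (by simp [mem_seg]), add_comm]
    constructor
    · exact le_of_eq_of_le hins hkey.1
    · intro hne
      exact lt_of_eq_of_lt hins (hkey.2 hne)
  · next hcond =>
    have hkey := sum_seg_le hA T
    rw [hTcard] at hkey
    exact hkey

/-- The vertex bound together with its equality case. -/
lemma vertex_ge (hn : 3 ≤ n) {a : Fin (2*n) → ℝ}
    (hA : ∀ i j : Fin (2*n), (i:ℕ) < (j:ℕ) → a i < a j)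
    {I : Finset (Fin (2*n))} (hI : Signed n I)
    {u : Equiv.Perm (Fin (2*n))} (hu : u ∈ WD n) :
    targetD n hn a I ≤ ∑ i ∈ I, a (u i) ∧
    (∑ i ∈ I, a (u i) = targetD n hn a I → I.image u = LD n hn I) := by
  have hsum : ∑ i ∈ I, a (u i) = ∑ t ∈ I.image u, a t :=
    (Finset.sum_image (fun x _ y _ h => u.injective h)).symm
  have hcard : (I.image u).card = I.card :=
    Finset.card_image_of_injective _ u.injective
  have hmin := LD_min hn hA (I := I) (T := I.image u) hcard
    (fun hIc => eps_image hu hI hIc)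
  constructor
  · rw [sum_LD hn a I, hsum]
    exact hmin.1
  · intro heq
    by_contra hne
    have hlt := hmin.2 hne
    rw [hsum, sum_LD hn a I] at heq
    exact lt_irrefl _ (lt_of_lt_of_eq hlt heq)

end WeightD
namespace WeightD

variable {n : ℕ}

/-- Any point lying on two facets is witnessed by a common optimal vertex. -/
lemma exists_vertex_of_mem_inter (hn : 3 ≤ n) {a : Fin (2*n) → ℝ}
    (hA : ∀ i j : Fin (2*n), (i:ℕ) < (j:ℕ) → a i < a j)
    {I J : Finset (Fin (2*n))} (hI : Signed n I) (hJ : Signed n J)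
    {x : Fin (2*n) → ℝ} (hx : x ∈ FD n hn a I ∩ FD n hn a J) :
    ∃ u ∈ WD n, I.image u = LD n hn I ∧ J.image u = LD n hn J := by
  obtain ⟨⟨hxP, hxI⟩, ⟨_, hxJ⟩⟩ := hx
  rw [PD, convexHull_eq] at hxP
  obtain ⟨ι, t, w, z, hw0, hw1, hz, hcm⟩ := hxP
  have hxval : x = ∑ k ∈ t, w k • z k := by
    rw [← hcm, Finset.centerMass_eq_of_sum_1 _ _ hw1]
  have hcoord : ∀ (K : Finset (Fin (2*n))), ∑ i ∈ K, x i
      = ∑ k ∈ t, w k * ∑ i ∈ K, z k i := by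
    intro K
    calc ∑ i ∈ K, x i = ∑ i ∈ K, ∑ k ∈ t, w k * z k i := by
          refine Finset.sum_congr rfl (fun i _ => ?_)
          rw [hxval, Finset.sum_apply]
          simp [smul_eq_mul]
      _ = ∑ k ∈ t, ∑ i ∈ K, w k * z k i := Finset.sum_comm
      _ = ∑ k ∈ t, w k * ∑ i ∈ K, z k i := by
          refine Finset.sum_congr rfl (fun k _ => ?_)
          rw [Finset.mul_sum]
  set tI := targetD n hn a I with htI
  set tJ := targetD n hn a J with htJ
  -- per-vertex bounds
  have hvert : ∀ k ∈ t, tI ≤ ∑ i ∈ I, z k i ∧ tJ ≤ ∑ i ∈ J, z k i := by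
    intro k hk
    obtain ⟨u, hu, hzk⟩ := hz k hk
    rw [hzk]
    exact ⟨(vertex_ge hn hA hI hu).1, (vertex_ge hn hA hJ hu).1⟩
  set g := fun k => (∑ i ∈ I, z k i - tI) + (∑ i ∈ J, z k i - tJ) with hg
  have hsum0 : ∑ k ∈ t, w k * g k = 0 := by
    have e1 : ∀ k ∈ t, w k * g k
        = w k * (∑ i ∈ I, z k i) + w k * (∑ i ∈ J, z k i) - w k * (tI + tJ) := by
      intro k _; rw [hg]; ring
    rw [Finset.sum_congr rfl e1, Finset.sum_sub_distrib, Finset.sum_add_distrib,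
      ← Finset.sum_mul, hw1, ← hcoord I, ← hcoord J, hxI, hxJ]
    ring
  have hnonneg : ∀ k ∈ t, 0 ≤ w k * g k := by
    intro k hk
    apply mul_nonneg (hw0 k hk)
    have := hvert k hk
    rw [hg]
    simp only
    nlinarith [this.1, this.2]
  have hall := (Finset.sum_eq_zero_iff_of_nonneg hnonneg).1 hsum0
  have hex : ∃ k ∈ t, w k ≠ 0 := by
    by_contra h
    push_neg at h
    rw [Finset.sum_eq_zero h] at hw1
    norm_num at hw1
  obtain ⟨k, hk, hwk⟩ := hex
  have hgk : g k = 0 := by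
    rcases mul_eq_zero.1 (hall k hk) with h | h
    · exact absurd h hwk
    · exact h
  obtain ⟨u, hu, hzk⟩ := hz k hk
  have hkI : ∑ i ∈ I, z k i = tI ∧ ∑ i ∈ J, z k i = tJ := by
    have h1 := (hvert k hk).1
    have h2 := (hvert k hk).2
    rw [hg] at hgk
    simp only at hgk
    constructor <;> nlinarith
  refine ⟨u, hu, ?_, ?_⟩
  · apply (vertex_ge hn hA hI hu).2
    have := hkI.1
    rw [hzk] at this
    exact this
  · apply (vertex_ge hn hA hJ hu).2
    have := hkI.2
    rw [hzk] at this
    exact this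

/-- A vertex adapted to both `I` and `J` gives a point of the intersection. -/
lemma mem_inter_of_vertex (hn : 3 ≤ n) {a : Fin (2*n) → ℝ}
    {I J : Finset (Fin (2*n))}
    {u : Equiv.Perm (Fin (2*n))} (hu : u ∈ WD n)
    (huI : I.image u = LD n hn I) (huJ : J.image u = LD n hn J) :
    (FD n hn a I ∩ FD n hn a J).Nonempty := by
  refine ⟨ptD n a u, ?_, ?_⟩ <;>
  · refine ⟨subset_convexHull ℝ _ ⟨u, hu, rfl⟩, ?_⟩
    rw [sum_LD hn a]
    first
      | (rw [← huI, Finset.sum_image (fun x _ y _ h => u.injective h)]; rfl)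
      | (rw [← huJ, Finset.sum_image (fun x _ y _ h => u.injective h)]; rfl)

end WeightD
namespace WeightD

/-- Any two nested pairs of finsets with matching cardinalities are related by
a permutation. -/
lemma exists_perm_nested {α : Type*} [Fintype α] [DecidableEq α]
    {s₁ s₂ t₁ t₂ : Finset α} (h12 : s₁ ⊆ s₂) (h12' : t₁ ⊆ t₂)
    (c1 : s₁.card = t₁.card) (c2 : s₂.card = t₂.card) :
    ∃ e : Equiv.Perm α, s₁.image e = t₁ ∧ s₂.image e = t₂ := by
  have cd : (s₂ \ s₁).card = (t₂ \ t₁).card := by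
    rw [Finset.card_sdiff_of_subset h12, Finset.card_sdiff_of_subset h12', c1, c2]
  have cc : (s₂ᶜ).card = (t₂ᶜ).card := by
    rw [Finset.card_compl, Finset.card_compl, c2]
  set E1 := Finset.equivOfCardEq c1
  set E2 := Finset.equivOfCardEq cd
  set E3 := Finset.equivOfCardEq cc
  set f : α → α := fun x =>
    if h : x ∈ s₁ then (E1 ⟨x, h⟩ : α)
    else if h2 : x ∈ s₂ then (E2 ⟨x, Finset.mem_sdiff.2 ⟨h2, h⟩⟩ : α)
    else (E3 ⟨x, Finset.mem_compl.2 h2⟩ : α) with hf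
  have hf1 : ∀ x (h : x ∈ s₁), f x = (E1 ⟨x, h⟩ : α) := by
    intro x h; rw [hf]; simp only [dif_pos h]
  have hf2 : ∀ x (h : x ∈ s₂) (h' : x ∉ s₁), f x = (E2 ⟨x, Finset.mem_sdiff.2 ⟨h, h'⟩⟩ : α) := by
    intro x h h'; rw [hf]; simp only [dif_neg h', dif_pos h]
  have hf3 : ∀ x (h : x ∉ s₂), f x = (E3 ⟨x, Finset.mem_compl.2 h⟩ : α) := by
    intro x h; rw [hf]
    simp only [dif_neg h, dif_neg (fun hx => h (h12 hx))]
  have hmem1 : ∀ x (h : x ∈ s₁), f x ∈ t₁ := by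
    intro x h; rw [hf1 x h]; exact (E1 ⟨x, h⟩).2
  have hmem2 : ∀ x (h : x ∈ s₂) (h' : x ∉ s₁), f x ∈ t₂ \ t₁ := by
    intro x h h'; rw [hf2 x h h']; exact (E2 _).2
  have hmem3 : ∀ x (h : x ∉ s₂), f x ∈ t₂ᶜ := by
    intro x h; rw [hf3 x h]; exact (E3 _).2
  have hinj : Function.Injective f := by
    intro x y hxy
    by_cases hx1 : x ∈ s₁ <;> by_cases hy1 : y ∈ s₁
    · rw [hf1 x hx1, hf1 y hy1] at hxy
      have := E1.injective (Subtype.ext hxy)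
      exact congrArg Subtype.val this
    all_goals (by_cases hx2 : x ∈ s₂ <;> by_cases hy2 : y ∈ s₂)
    all_goals (try (exact absurd (h12 hx1) hx2))
    all_goals (try (exact absurd (h12 hy1) hy2))
    -- 1: x ∈ s₁, y ∈ s₂ \ s₁
    · exfalso
      have m1 := hmem1 x hx1
      have m2 := hmem2 y hy2 hy1
      rw [hxy] at m1
      exact (Finset.mem_sdiff.1 m2).2 m1
    -- 2: x ∈ s₁, y ∉ s₂
    · exfalso
      have m1 := hmem1 x hx1
      have m3 := hmem3 y hy2
      rw [hxy] at m1
      exact (Finset.mem_compl.1 m3) (h12' m1)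
    -- 3: y ∈ s₁, x ∈ s₂ \ s₁
    · exfalso
      have m1 := hmem1 y hy1
      have m2 := hmem2 x hx2 hx1
      rw [← hxy] at m1
      exact (Finset.mem_sdiff.1 m2).2 m1
    -- 4: y ∈ s₁, x ∉ s₂
    · exfalso
      have m1 := hmem1 y hy1
      have m3 := hmem3 x hx2
      rw [hxy] at m3
      exact (Finset.mem_compl.1 m3) (h12' m1)
    -- 5: both in s₂ \ s₁
    · rw [hf2 x hx2 hx1, hf2 y hy2 hy1] at hxy
      have := E2.injective (Subtype.ext hxy)
      exact congrArg Subtype.val this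
    -- 6: x ∈ s₂ \ s₁, y ∉ s₂
    · exfalso
      have m2 := hmem2 x hx2 hx1
      have m3 := hmem3 y hy2
      rw [hxy] at m2
      exact (Finset.mem_compl.1 m3) (Finset.mem_sdiff.1 m2).1
    -- 7: x ∉ s₂, y ∈ s₂ \ s₁
    · exfalso
      have m2 := hmem2 y hy2 hy1
      have m3 := hmem3 x hx2
      rw [← hxy] at m2
      exact (Finset.mem_compl.1 m3) (Finset.mem_sdiff.1 m2).1
    -- 8: both outside s₂
    · rw [hf3 x hx2, hf3 y hy2] at hxy
      have := E3.injective (Subtype.ext hxy)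
      exact congrArg Subtype.val this
  set e := Equiv.ofBijective f (Finite.injective_iff_bijective.1 hinj) with he
  have heapp : ∀ x, e x = f x := fun x => rfl
  refine ⟨e, ?_, ?_⟩
  · apply Finset.eq_of_subset_of_card_le
    · intro y hy
      rcases Finset.mem_image.1 hy with ⟨x, hx, rfl⟩
      rw [heapp]
      exact hmem1 x hx
    · rw [Finset.card_image_of_injective _ e.injective, c1]
  · apply Finset.eq_of_subset_of_card_le
    · intro y hy
      rcases Finset.mem_image.1 hy with ⟨x, hx, rfl⟩
      rw [heapp]
      by_cases hx1 : x ∈ s₁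
      · exact h12' (hmem1 x hx1)
      · exact (Finset.mem_sdiff.1 (hmem2 x hx hx1)).1
    · rw [Finset.card_image_of_injective _ e.injective, c2]

end WeightD
namespace WeightD

variable {n : ℕ}

lemma LD_signed (hn : 3 ≤ n) {I : Finset (Fin (2*n))} (hI : Signed n I) :
    Signed n (LD n hn I) := by
  have hle := signed_card_le hI
  have hpos : 1 ≤ I.card := Finset.card_pos.2 hI.1
  unfold LD
  split
  · constructor
    · exact ⟨⟨n, by omega⟩, Finset.mem_insert_self _ _⟩
    · intro i hi ⟨h1, h2⟩
      rcases Finset.mem_insert.1 h1 with h | h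
      · have := congrArg Fin.val h; simp at this; omega
      · rcases Finset.mem_insert.1 h2 with h' | h'
        · have := congrArg Fin.val h'
          rw [val_rev] at this
          simp only [mem_seg] at h
          simp at this
          omega
        · simp only [mem_seg] at h h'
          rw [val_rev] at h'
          omega
  · constructor
    · exact ⟨⟨0, by omega⟩, mem_seg.2 (by simpa using hpos)⟩
    · intro i hi ⟨h1, h2⟩
      simp only [mem_seg] at h1 h2
      rw [val_rev] at h2
      omega

lemma eps_LD (hn : 3 ≤ n) {I : Finset (Fin (2*n))} (hIc : I.card = n) :
    ((((LD n hn I).filter (fun i : Fin (2*n) => n ≤ (i:ℕ))).card : ℕ) : ZMod 2)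
      = (((I.filter (fun i : Fin (2*n) => n ≤ (i:ℕ))).card : ℕ) : ZMod 2) := by
  unfold LD
  split
  · next hcond =>
    have : (insert (⟨n, by omega⟩ : Fin (2*n)) (seg n (n-1))).filter
        (fun i : Fin (2*n) => n ≤ (i:ℕ)) = {⟨n, by omega⟩} := by
      ext i
      simp only [Finset.mem_filter, Finset.mem_insert, mem_seg, Finset.mem_singleton,
        Fin.ext_iff]
      omega
    rw [this, Finset.card_singleton, ((odd_iff_zmod _).1 hcond.2)]
    rfl
  · next hcond =>
    have hcond' : ¬ Odd ((I.filter (fun i : Fin (2*n) => n ≤ (i:ℕ))).card) := by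
      intro h; exact hcond ⟨hIc, h⟩
    have : (seg n I.card).filter (fun i : Fin (2*n) => n ≤ (i:ℕ)) = ∅ := by
      ext i
      simp only [Finset.mem_filter, mem_seg, Finset.notMem_empty, iff_false, not_and, not_le]
      intro h; omega
    rw [this, Finset.card_empty, ((even_iff_zmod _).1 (Nat.not_odd_iff_even.1 hcond'))]
    rfl

lemma LD_subset (hn : 3 ≤ n) {I J : Finset (Fin (2*n))} (hI : Signed n I)
    (hJ : Signed n J) (hIJ : I ⊆ J) (hIcard : I.card ≠ n - 1) :
    LD n hn I ⊆ LD n hn J := by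
  have hkm : I.card ≤ J.card := Finset.card_le_card hIJ
  have hm : J.card ≤ n := signed_card_le hJ
  by_cases hIn : I.card = n
  · have hEq : I = J := Finset.eq_of_subset_of_card_le hIJ (by omega)
    subst hEq
    exact subset_refl _
  · have hIcond : ¬ (I.card = n ∧ Odd ((I.filter (fun i : Fin (2*n) => n ≤ (i:ℕ))).card)) :=
      fun h => hIn h.1
    by_cases hJcond : (J.card = n ∧ Odd ((J.filter (fun i : Fin (2*n) => n ≤ (i:ℕ))).card))
    · -- LD J = insert ⟨n⟩ (seg (n-1)), LD I = seg I.card with I.card ≤ n-2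
      unfold LD
      rw [if_neg hIcond, if_pos hJcond]
      intro i hi
      rw [mem_seg] at hi
      apply Finset.mem_insert_of_mem
      rw [mem_seg]
      omega
    · unfold LD
      rw [if_neg hIcond, if_neg hJcond]
      intro i hi
      rw [mem_seg] at hi ⊢
      omega

lemma pairs_univ {J : Finset (Fin (2*n))} (hJ : Signed n J) (hJc : J.card = n) :
    J.image (pr n) = Finset.univ := by
  apply Finset.eq_univ_of_card
  rw [card_pairs hJ, hJc, Fintype.card_fin]

lemma sum_belem {J : Finset (Fin (2*n))} (hJ : Signed n J) (hJc : J.card = n)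
    (f : Fin (2*n) → ZMod 2) :
    ∑ p : Fin n, f (belem n J p) = ∑ j ∈ J, f j := by
  rw [← pairs_univ hJ hJc, Finset.sum_image (fun x hx y hy h => pr_injOn hJ hx hy h)]
  exact Finset.sum_congr rfl (fun j hj => congrArg f (belem_eq_of_mem hJ hj))

/-- The canonical sign vector. -/
def coreb (n : ℕ) (J M : Finset (Fin (2*n))) (σ : Equiv.Perm (Fin n)) :
    Fin n → Bool :=
  fun p => ((decide (((belem n J p : Fin (2*n)) : ℕ) < n)) ==
    (decide (n ≤ ((belem n M (σ p) : Fin (2*n)) : ℕ))))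

/-- Evenness of the canonical sign vector when `|J| = n`. -/
lemma core_even (hn : 3 ≤ n) {J : Finset (Fin (2*n))} (hJ : Signed n J)
    (hJc : J.card = n) (σ : Equiv.Perm (Fin n)) :
    Even ((Finset.univ.filter (fun p : Fin n =>
      coreb n J (LD n hn J) σ p = true)).card) := by
  unfold coreb
  set LJ := LD n hn J with hLJ
  have hLJs : Signed n LJ := LD_signed hn hJ
  have hLJc : LJ.card = n := by
    rw [hLJ, LD_card hn (signed_card_le hJ), hJc]
  rw [even_iff_zmod]
  have hterm : ∀ p : Fin n,
      (if ((decide (((belem n J p : Fin (2*n)) : ℕ) < n)) ==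
        (decide (n ≤ ((belem n LJ (σ p) : Fin (2*n)) : ℕ)))) = true then (1 : ZMod 2) else 0)
      = chi n (belem n J p) + chi n (belem n LJ (σ p)) := by
    intro p
    simp only [chi]
    by_cases h1 : ((belem n J p : Fin (2*n)) : ℕ) < n <;>
      by_cases h2 : n ≤ ((belem n LJ (σ p) : Fin (2*n)) : ℕ)
    · rw [if_pos (by simp [h1, h2]), if_neg (by omega), if_pos h2]; decide
    · rw [if_neg (by simp [h1, h2]), if_neg (by omega), if_neg h2]; decide
    · rw [if_neg (by simp [h1, h2]), if_pos (by omega), if_pos h2]; decide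
    · rw [if_pos (by simp [h1, h2]), if_pos (by omega), if_neg h2]; decide
  have hcast : ((Finset.univ.filter (fun p : Fin n =>
      ((decide (((belem n J p : Fin (2*n)) : ℕ) < n)) ==
        (decide (n ≤ ((belem n LJ (σ p) : Fin (2*n)) : ℕ)))) = true)).card : ZMod 2)
      = ∑ p : Fin n, (if ((decide (((belem n J p : Fin (2*n)) : ℕ) < n)) ==
        (decide (n ≤ ((belem n LJ (σ p) : Fin (2*n)) : ℕ)))) = true then (1 : ZMod 2) else 0) := by
    rw [Finset.sum_boole]
  rw [hcast, Finset.sum_congr rfl (fun p _ => hterm p), Finset.sum_add_distrib]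
  have e1 : ∑ p : Fin n, chi n (belem n J p) = ∑ j ∈ J, chi n j := sum_belem hJ hJc _
  have e2 : ∑ p : Fin n, chi n (belem n LJ (σ p)) = ∑ j ∈ LJ, chi n j := by
    rw [Equiv.sum_comp σ (fun q => chi n (belem n LJ q))]
    exact sum_belem hLJs hLJc _
  rw [e1, e2, sum_chi, sum_chi, eps_LD hn hJc]
  have : ∀ x : ZMod 2, x + x = 0 := by decide
  exact this _

end WeightD
namespace WeightD

variable {n : ℕ}

/-- If the sign vector agrees with the canonical one on the pairs of `J`,
then the constructed signed permutation maps `I` to `LI` and `J` to `LJ`. -/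
lemma images_of_b (hn : 3 ≤ n) {I J : Finset (Fin (2*n))}
    (hI : Signed n I) (hJ : Signed n J) (hIJ : I ⊆ J)
    (hLIJ : LD n hn I ⊆ LD n hn J)
    (σ : Equiv.Perm (Fin n))
    (hσ1 : (I.image (pr n)).image σ = (LD n hn I).image (pr n))
    (hσ2 : (J.image (pr n)).image σ = (LD n hn J).image (pr n))
    (b : Fin n → Bool)
    (hb : ∀ p ∈ J.image (pr n), b p = coreb n J (LD n hn J) σ p) :
    I.image (spPerm n σ b) = LD n hn I ∧ J.image (spPerm n σ b) = LD n hn J := by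
  set LI := LD n hn I with hLI
  set LJ := LD n hn J with hLJdef
  have hLIs : Signed n LI := LD_signed hn hI
  have hLJs : Signed n LJ := LD_signed hn hJ
  have hLIc : LI.card = I.card := LD_card hn (signed_card_le hI)
  have hLJc : LJ.card = J.card := LD_card hn (signed_card_le hJ)
  have hmap : ∀ j ∈ J, spPerm n σ b j = belem n LJ (σ (pr n j)) := by
    intro j hj
    have hpj : pr n j ∈ J.image (pr n) := Finset.mem_image_of_mem _ hj
    have hj' : belem n J (pr n j) = j := belem_eq_of_mem hJ hj
    calc spPerm n σ b j = sp n σ b (belem n J (pr n j)) := by rw [hj']; rfl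
      _ = belem n LJ (σ (pr n j)) := sp_belem σ b J LJ _ ((hb _ hpj).trans rfl)
  have hJim : J.image (spPerm n σ b) = LJ := by
    apply Finset.eq_of_subset_of_card_le
    · intro y hy
      rcases Finset.mem_image.1 hy with ⟨j, hj, rfl⟩
      rw [hmap j hj]
      apply belem_mem
      rw [← hσ2]
      exact Finset.mem_image_of_mem _ (Finset.mem_image_of_mem _ hj)
    · rw [Finset.card_image_of_injective _ (spPerm n σ b).injective, hLJc]
  have hIim : I.image (spPerm n σ b) = LI := by
    apply Finset.eq_of_subset_of_card_le
    · intro y hy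
      rcases Finset.mem_image.1 hy with ⟨i, hi, rfl⟩
      rw [hmap i (hIJ hi)]
      have hpLI : σ (pr n i) ∈ LI.image (pr n) := by
        rw [← hσ1]
        exact Finset.mem_image_of_mem _ (Finset.mem_image_of_mem _ hi)
      rw [belem_subset hLJs hLIJ hpLI]
      exact belem_mem hpLI
    · rw [Finset.card_image_of_injective _ (spPerm n σ b).injective, hLIc]
  exact ⟨hIim, hJim⟩

/-- Main construction, comparable case. -/
lemma exists_u_subset (hn : 3 ≤ n) {I J : Finset (Fin (2*n))}
    (hI : Signed n I) (hJ : Signed n J) (hIJ : I ⊆ J) (hIcard : I.card ≠ n - 1) :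
    ∃ u ∈ WD n, I.image u = LD n hn I ∧ J.image u = LD n hn J := by
  set LI := LD n hn I with hLI
  set LJ := LD n hn J with hLJdef
  have hLIs : Signed n LI := LD_signed hn hI
  have hLJs : Signed n LJ := LD_signed hn hJ
  have hLIc : LI.card = I.card := LD_card hn (signed_card_le hI)
  have hLJc : LJ.card = J.card := LD_card hn (signed_card_le hJ)
  have hLIJ : LI ⊆ LJ := LD_subset hn hI hJ hIJ hIcard
  have hpIJ : I.image (pr n) ⊆ J.image (pr n) := Finset.image_subset_image hIJ
  have hpLIJ : LI.image (pr n) ⊆ LJ.image (pr n) := Finset.image_subset_image hLIJ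
  have c1 : (I.image (pr n)).card = (LI.image (pr n)).card := by
    rw [card_pairs hI, card_pairs hLIs, hLIc]
  have c2 : (J.image (pr n)).card = (LJ.image (pr n)).card := by
    rw [card_pairs hJ, card_pairs hLJs, hLJc]
  obtain ⟨σ, hσ1, hσ2⟩ := exists_perm_nested hpIJ hpLIJ c1 c2
  by_cases hm : J.card = n
  · -- forced parity, even automatically
    refine ⟨spPerm n σ (coreb n J LJ σ), ⟨spPerm_rev σ _, ?_⟩, ?_⟩
    · rw [spPerm_flipcount]
      exact core_even hn hJ hm σ
    · exact images_of_b hn hI hJ hIJ hLIJ σ hσ1 hσ2 _ (fun p _ => rfl)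
  · -- free pair available to adjust parity
    have hmlt : (J.image (pr n)).card < n := by
      rw [card_pairs hJ]
      have := signed_card_le hJ
      omega
    obtain ⟨p₀, hp₀⟩ : ∃ p : Fin n, p ∉ J.image (pr n) := by
      by_contra h
      push_neg at h
      have : (J.image (pr n)) = Finset.univ := Finset.eq_univ_iff_forall.2 h
      rw [this] at hmlt
      simp at hmlt
    set cnt := ((J.image (pr n)).filter (fun p => coreb n J LJ σ p = true)).card with hcnt
    set flag : Bool := if Even cnt then false else true with hflag
    set b : Fin n → Bool := fun p =>
      if p ∈ J.image (pr n) then coreb n J LJ σ p else (decide (p = p₀) && flag) with hbdef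
    have hb : ∀ p ∈ J.image (pr n), b p = coreb n J LJ σ p := by
      intro p hp
      simp only [hbdef]
      rw [if_pos hp]
    refine ⟨spPerm n σ b, ⟨spPerm_rev σ _, ?_⟩, ?_⟩
    · rw [spPerm_flipcount]
      have hsplit : (Finset.univ.filter (fun p : Fin n => b p = true)).card
          = ((J.image (pr n)).filter (fun p => b p = true)).card
            + (((J.image (pr n))ᶜ).filter (fun p => b p = true)).card := by
        rw [← Finset.card_union_of_disjoint
          (Finset.disjoint_filter_filter disjoint_compl_right), ← Finset.filter_union,
          Finset.union_compl]
      have e1 : ((J.image (pr n)).filter (fun p => b p = true))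
          = ((J.image (pr n)).filter (fun p => coreb n J LJ σ p = true)) := by
        apply Finset.filter_congr
        intro p hp
        rw [hb p hp]
      rw [hsplit, e1]
      by_cases hev : Even cnt
      · have hfl : flag = false := by rw [hflag, if_pos hev]
        have e2 : (((J.image (pr n))ᶜ).filter (fun p => b p = true)) = ∅ := by
          apply Finset.eq_empty_of_forall_notMem
          intro p hp
          rcases Finset.mem_filter.1 hp with ⟨hp1, hb'⟩
          rw [Finset.mem_compl] at hp1
          simp only [hbdef, if_neg hp1, hfl, Bool.and_false] at hb'
          exact Bool.false_ne_true hb'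
        rw [e2, Finset.card_empty, add_zero, ← hcnt]
        exact hev
      · have hfl : flag = true := by rw [hflag, if_neg hev]
        have e2 : (((J.image (pr n))ᶜ).filter (fun p => b p = true)) = {p₀} := by
          ext p
          rw [Finset.mem_filter, Finset.mem_compl, Finset.mem_singleton]
          constructor
          · rintro ⟨hp1, hb'⟩
            simp only [hbdef, if_neg hp1, hfl, Bool.and_true, decide_eq_true_eq] at hb'
            exact hb'
          · rintro rfl
            refine ⟨hp₀, ?_⟩
            simp only [hbdef, if_neg hp₀, hfl, Bool.and_true, decide_eq_true_eq]
        rw [e2, Finset.card_singleton, ← hcnt, Nat.even_add_one]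
        intro h
        exact hev h
    · exact images_of_b hn hI hJ hIJ hLIJ σ hσ1 hσ2 b hb

end WeightD
namespace WeightD

variable {n : ℕ}

lemma rev_ne_self (i : Fin (2*n)) : i.rev ≠ i := by
  intro h
  have := congrArg Fin.val h
  rw [val_rev] at this
  have := i.isLt
  omega

lemma rev_not_mem {J : Finset (Fin (2*n))} (hJ : Signed n J) {j : Fin (2*n)}
    (hj : j ∈ J) : j.rev ∉ J := by
  intro h
  have := signed_unique hJ hj h (pr_rev j).symm
  exact rev_ne_self j this.symm

lemma spPerm_maps {J M : Finset (Fin (2*n))} (hJ : Signed n J)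
    (σ : Equiv.Perm (Fin n)) (b : Fin n → Bool)
    (hb : ∀ p ∈ J.image (pr n), b p = coreb n J M σ p) :
    ∀ j ∈ J, spPerm n σ b j = belem n M (σ (pr n j)) := by
  intro j hj
  have hpj : pr n j ∈ J.image (pr n) := Finset.mem_image_of_mem _ hj
  have hj' : belem n J (pr n j) = j := belem_eq_of_mem hJ hj
  calc spPerm n σ b j = sp n σ b (belem n J (pr n j)) := by rw [hj']; rfl
    _ = belem n M (σ (pr n j)) := sp_belem σ b J M _ ((hb _ hpj).trans rfl)

/-- Shape of `LD` under a single sign swap. -/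
lemma LD_swap_shape (hn : 3 ≤ n) {I J : Finset (Fin (2*n))}
    (hIcard : I.card = n) (hJc : J.card = n)
    (heps : (((I.filter (fun i : Fin (2*n) => n ≤ (i:ℕ))).card : ℕ) : ZMod 2)
      = (((J.filter (fun i : Fin (2*n) => n ≤ (i:ℕ))).card : ℕ) : ZMod 2) + 1) :
    ∃ l : Fin (2*n), l ∈ LD n hn J ∧ pr n l = ⟨n-1, by omega⟩ ∧
      LD n hn I = insert l.rev ((LD n hn J).erase l) := by
  have h2n : n < 2*n := by omega
  have hn1 : n - 1 < 2*n := by omega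
  have hn1' : n - 1 < n := by omega
  by_cases hodd : Odd ((J.filter (fun i : Fin (2*n) => n ≤ (i:ℕ))).card)
  · -- LD J odd shape; LD I = seg n
    have hLJval : LD n hn J = insert (⟨n, h2n⟩ : Fin (2*n)) (seg n (n-1)) := by
      unfold LD
      rw [if_pos ⟨hJc, hodd⟩]
    have hInotodd : ¬ Odd ((I.filter (fun i : Fin (2*n) => n ≤ (i:ℕ))).card) := by
      rw [odd_iff_zmod, heps, (odd_iff_zmod _).1 hodd]
      decide
    have hLIval : LD n hn I = seg n n := by
      unfold LD
      rw [if_neg (fun h => hInotodd h.2), hIcard]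
    refine ⟨⟨n, h2n⟩, hLJval ▸ Finset.mem_insert_self _ _, ?_, ?_⟩
    · unfold pr
      rw [dif_neg (by simp)]
      ext
      simp
      omega
    · have hrevval : (⟨n, h2n⟩ : Fin (2*n)).rev = ⟨n-1, hn1⟩ := by
        ext; rw [val_rev]; simp; omega
      rw [hLIval, hLJval, hrevval, Finset.erase_insert (by simp [mem_seg])]
      rw [seg_eq_insert (by omega : 1 ≤ n) (by omega : n ≤ 2*n)]
  · -- LD J = seg n; LD I odd shape
    have hLJval : LD n hn J = seg n n := by
      unfold LD
      rw [if_neg (fun h => hodd h.2), hJc]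
    have hIodd : Odd ((I.filter (fun i : Fin (2*n) => n ≤ (i:ℕ))).card) := by
      rw [odd_iff_zmod, heps, (even_iff_zmod _).1 (Nat.not_odd_iff_even.1 hodd)]
      decide
    have hLIval : LD n hn I = insert (⟨n, h2n⟩ : Fin (2*n)) (seg n (n-1)) := by
      unfold LD
      rw [if_pos ⟨hIcard, hIodd⟩]
    refine ⟨⟨n-1, hn1⟩, by rw [hLJval]; simp [mem_seg]; omega, ?_, ?_⟩
    · unfold pr
      rw [dif_pos (by simp; omega)]
    · have hrevval : (⟨n-1, hn1⟩ : Fin (2*n)).rev = ⟨n, h2n⟩ := by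
        ext; rw [val_rev]; simp; omega
      have herase : (seg n n).erase (⟨n-1, hn1⟩ : Fin (2*n)) = seg n (n-1) := by
        ext i
        simp [Finset.mem_erase, mem_seg, Fin.ext_iff]
        omega
      rw [hLIval, hLJval, hrevval, herase]

/-- Main construction, swap case. -/
lemma exists_u_swap (hn : 3 ≤ n) {J : Finset (Fin (2*n))} (hJ : Signed n J)
    (hJc : J.card = n) {j : Fin (2*n)} (hj : j ∈ J)
    {I : Finset (Fin (2*n))} (hIdef : I = insert j.rev (J.erase j))
    (hIs : Signed n I) :
    ∃ u ∈ WD n, I.image u = LD n hn I ∧ J.image u = LD n hn J := by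
  have hrevj : j.rev ∉ J := rev_not_mem hJ hj
  have hrevje : j.rev ∉ J.erase j := fun h => hrevj (Finset.mem_of_mem_erase h)
  have hIcard : I.card = n := by
    rw [hIdef, Finset.card_insert_of_notMem hrevje, Finset.card_erase_of_mem hj, hJc]
    omega
  set LJ := LD n hn J with hLJdef
  have hLJs : Signed n LJ := LD_signed hn hJ
  have hLJc : LJ.card = n := by rw [hLJdef, LD_card hn (signed_card_le hJ), hJc]
  -- parity flip
  have heps : (((I.filter (fun i : Fin (2*n) => n ≤ (i:ℕ))).card : ℕ) : ZMod 2)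
      = (((J.filter (fun i : Fin (2*n) => n ≤ (i:ℕ))).card : ℕ) : ZMod 2) + 1 := by
    rw [← sum_chi, ← sum_chi, hIdef, Finset.sum_insert hrevje, chi_rev]
    have h := Finset.sum_erase_add J (chi n) hj
    linear_combination h
  have h2n : n < 2*n := by omega
  have hn1 : n - 1 < 2*n := by omega
  have hn1' : n - 1 < n := by omega
  -- the distinguished element of LD J in the pair {n-1, n}
  obtain ⟨l, hlJ, hlpr, hLIeq⟩ := LD_swap_shape hn hIcard hJc heps
  -- the pair permutation
  obtain ⟨σ, hσ1, hσ2⟩ := exists_perm_nested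
    (Finset.subset_univ ({pr n j} : Finset (Fin n)))
    (Finset.subset_univ ({(⟨n-1, hn1'⟩ : Fin n)} : Finset (Fin n)))
    (by simp) rfl
  have hσval : σ (pr n j) = ⟨n-1, hn1'⟩ := by
    have := hσ1
    rw [Finset.image_singleton] at this
    exact Finset.singleton_injective this
  set b := coreb n J LJ σ with hbdef
  have hb : ∀ p ∈ J.image (pr n), b p = coreb n J LJ σ p := fun p _ => rfl
  have hmap := spPerm_maps hJ σ b hb
  set u := spPerm n σ b with hudef
  have hpLJuniv : LJ.image (pr n) = Finset.univ := pairs_univ hLJs hLJc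
  have hJim : J.image u = LJ := by
    apply Finset.eq_of_subset_of_card_le
    · intro y hy
      rcases Finset.mem_image.1 hy with ⟨x, hx, rfl⟩
      rw [hmap x hx]
      exact belem_mem (by rw [hpLJuniv]; exact Finset.mem_univ _)
    · rw [Finset.card_image_of_injective _ u.injective, hLJc, hJc]
  have hlbelem : belem n LJ (⟨n-1, hn1'⟩ : Fin n) = l := by
    apply signed_unique hLJs (belem_mem (by rw [hpLJuniv]; exact Finset.mem_univ _)) hlJ
    rw [belem_pr, hlpr]
  have hIim : I.image u = LD n hn I := by
    apply Finset.eq_of_subset_of_card_le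
    · intro y hy
      rcases Finset.mem_image.1 hy with ⟨i, hi, rfl⟩
      rw [hIdef] at hi
      rcases Finset.mem_insert.1 hi with rfl | hi'
      · -- i = j.rev
        rw [hudef, spPerm_rev, ← hudef, hmap j hj, hσval, hlbelem, hLIeq]
        exact Finset.mem_insert_self _ _
      · have hiJ : i ∈ J := Finset.mem_of_mem_erase hi'
        have hij : i ≠ j := Finset.ne_of_mem_erase hi'
        rw [hmap i hiJ]
        have hne : belem n LJ (σ (pr n i)) ≠ l := by
          intro h
          have hpr : σ (pr n i) = pr n l := by rw [← h, belem_pr]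
          rw [hlpr, ← hσval] at hpr
          have := σ.injective hpr
          exact hij (signed_unique hJ hiJ hj this)
        rw [hLIeq]
        apply Finset.mem_insert_of_mem
        rw [Finset.mem_erase]
        exact ⟨hne, belem_mem (by rw [hpLJuniv]; exact Finset.mem_univ _)⟩
    · rw [Finset.card_image_of_injective _ u.injective, hIcard,
        LD_card hn (signed_card_le hIs), hIcard]
  exact ⟨u, ⟨spPerm_rev σ b, by rw [spPerm_flipcount]; exact core_even hn hJ hJc σ⟩,
    hIim, hJim⟩

end WeightD
namespace WeightD

variable {n : ℕ}

lemma amono_all {a : Fin (2*n) → ℝ} (haE : a ∈ E n)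
    (hmono : ∀ i j : Fin (2 * n), (i : ℕ) < (j : ℕ) → (j : ℕ) < n → a i < a j)
    (haneg : ∀ i : Fin (2 * n), (i : ℕ) < n → a i < 0) :
    ∀ i j : Fin (2*n), (i:ℕ) < (j:ℕ) → a i < a j := by
  have hval : ∀ i : Fin (2*n), ¬((i:ℕ) < n) → a i = - a i.rev := by
    intro i h
    have h' : ((i.rev : Fin (2*n)) : ℕ) < n := (rev_lt_iff i).2 h
    have := haE i.rev h'
    rw [Fin.rev_rev] at this
    linarith
  intro i j hij
  by_cases hjn : (j:ℕ) < n
  · exact hmono i j hij hjn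
  · have haj : a j = - a j.rev := hval j hjn
    by_cases hin : (i:ℕ) < n
    · have h1 : a i < 0 := haneg i hin
      have h2 : a j.rev < 0 := haneg j.rev ((rev_lt_iff j).2 hjn)
      linarith
    · have hai : a i = - a i.rev := hval i hin
      have hrev : ((j.rev : Fin (2*n)) : ℕ) < ((i.rev : Fin (2*n)) : ℕ) := by
        rw [val_rev, val_rev]
        have := j.isLt
        omega
      have := hmono j.rev i.rev hrev ((rev_lt_iff i).2 hin)
      linarith

lemma usymm_rev {u : Equiv.Perm (Fin (2*n))} (hu : ∀ i, u i.rev = (u i).rev) :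
    ∀ x : Fin (2*n), u.symm x.rev = (u.symm x).rev := by
  intro x
  apply u.injective
  rw [Equiv.apply_symm_apply, hu, Equiv.apply_symm_apply]

lemma subset_of_images {u : Equiv.Perm (Fin (2*n))} {I J A B : Finset (Fin (2*n))}
    (huI : I.image u = A) (huJ : J.image u = B) (hsub : A ⊆ B) : I ⊆ J := by
  intro i hi
  have h1 : u i ∈ B := hsub (huI ▸ Finset.mem_image_of_mem _ hi)
  rw [← huJ] at h1
  rcases Finset.mem_image.1 h1 with ⟨x, hx, hux⟩
  rwa [← u.injective hux]

lemma LD_le_subset (hn : 3 ≤ n) {I J : Finset (Fin (2*n))}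
    (hIc : I.card ≤ n - 2) (hJc : J.card ≤ n) (hIJc : I.card ≤ J.card) :
    LD n hn I ⊆ LD n hn J := by
  have hIne : I.card ≠ n := by omega
  unfold LD
  rw [if_neg (fun h => hIne h.1)]
  split
  · next h =>
    intro i hi
    rw [mem_seg] at hi
    apply Finset.mem_insert_of_mem
    rw [mem_seg]
    omega
  · intro i hi
    rw [mem_seg] at hi ⊢
    omega

lemma signed_full_pair {J : Finset (Fin (2*n))} (hJ : Signed n J) (hJc : J.card = n)
    (i : Fin (2*n)) : i ∈ J ∨ i.rev ∈ J := by
  have : pr n i ∈ J.image (pr n) := by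
    rw [pairs_univ hJ hJc]; exact Finset.mem_univ _
  rcases Finset.mem_image.1 this with ⟨x, hx, hpx⟩
  rcases pr_eq_cases hpx.symm with h | h
  · exact Or.inl (h ▸ hx)
  · exact Or.inr (h ▸ hx)

/-- Transport of the swap shape through a signed permutation. -/
lemma swap_transport {u : Equiv.Perm (Fin (2*n))} (hu : ∀ i, u i.rev = (u i).rev)
    {I J : Finset (Fin (2*n))} (hn : 3 ≤ n)
    (huI : I.image u = LD n hn I) (huJ : J.image u = LD n hn J)
    {l : Fin (2*n)} (hl : l ∈ LD n hn J)
    (hLIeq : LD n hn I = insert l.rev ((LD n hn J).erase l)) :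
    u.symm l ∈ J ∧ I = insert (u.symm l).rev (J.erase (u.symm l)) := by
  have hpre : ∀ K A : Finset (Fin (2*n)), K.image u = A → A.image u.symm = K := by
    intro K A h
    rw [← h, Finset.image_image, Equiv.symm_comp_self, Finset.image_id]
  constructor
  · rw [← hpre J _ huJ]
    exact Finset.mem_image_of_mem _ hl
  · rw [← hpre I _ huI, hLIeq, Finset.image_insert, usymm_rev hu,
      Finset.image_erase u.symm.injective, hpre J _ huJ]

/-- Part (1) of the lemma. -/
lemma part1 (hn : 3 ≤ n) {a : Fin (2*n) → ℝ}
    (hA : ∀ i j : Fin (2*n), (i:ℕ) < (j:ℕ) → a i < a j)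
    {I J : Finset (Fin (2*n))}
    (hIsgn : Signed n I) (hIcard : I.card ≠ n - 1)
    (hJsgn : Signed n J) (hJcard : J.card ≠ n - 1)
    (hne : I.card ≠ n ∨ J.card ≠ n) :
    (FD n hn a I ∩ FD n hn a J).Nonempty ↔ I ⊆ J ∨ J ⊆ I := by
  constructor
  · rintro ⟨x, hx⟩
    obtain ⟨u, hu, huI, huJ⟩ := exists_vertex_of_mem_inter hn hA hIsgn hJsgn hx
    rcases le_total I.card J.card with hc | hc
    · left
      have hIlt : I.card ≤ n - 2 := by
        have h1 := signed_card_le hIsgn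
        have h2 := signed_card_le hJsgn
        rcases hne with h | h
        · omega
        · omega
      exact subset_of_images huI huJ (LD_le_subset hn hIlt (signed_card_le hJsgn) hc)
    · right
      have hJlt : J.card ≤ n - 2 := by
        have h1 := signed_card_le hIsgn
        have h2 := signed_card_le hJsgn
        rcases hne with h | h
        · omega
        · omega
      exact subset_of_images huJ huI (LD_le_subset hn hJlt (signed_card_le hIsgn) hc)
  · intro h
    rcases h with h | h
    · obtain ⟨u, hu, huI, huJ⟩ := exists_u_subset hn hIsgn hJsgn h hIcard
      exact mem_inter_of_vertex hn hu huI huJ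
    · obtain ⟨u, hu, huJ, huI⟩ := exists_u_subset hn hJsgn hIsgn h hJcard
      exact mem_inter_of_vertex hn hu huI huJ

/-- Part (2) of the lemma. -/
lemma part2 (hn : 3 ≤ n) {a : Fin (2*n) → ℝ}
    (hA : ∀ i j : Fin (2*n), (i:ℕ) < (j:ℕ) → a i < a j)
    {I J : Finset (Fin (2*n))}
    (hIsgn : Signed n I) (hJsgn : Signed n J)
    (hIc : I.card = n) (hJc : J.card = n) :
    (FD n hn a I ∩ FD n hn a J).Nonempty ↔
      I = J ∨ ∃ j ∈ J, I = insert j.rev (J.erase j) := by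
  constructor
  · rintro ⟨x, hx⟩
    obtain ⟨u, hu, huI, huJ⟩ := exists_vertex_of_mem_inter hn hA hIsgn hJsgn hx
    by_cases hOI : Odd ((I.filter (fun i : Fin (2*n) => n ≤ (i:ℕ))).card) <;>
      by_cases hOJ : Odd ((J.filter (fun i : Fin (2*n) => n ≤ (i:ℕ))).card)
    · -- both odd: LD I = LD J
      left
      apply Finset.image_injective u.injective
      rw [huI, huJ]
      unfold LD
      rw [if_pos ⟨hIc, hOI⟩, if_pos ⟨hJc, hOJ⟩]
    · -- I odd, J even: swap
      right
      have heps : (((I.filter (fun i : Fin (2*n) => n ≤ (i:ℕ))).card : ℕ) : ZMod 2)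
          = (((J.filter (fun i : Fin (2*n) => n ≤ (i:ℕ))).card : ℕ) : ZMod 2) + 1 := by
        rw [(odd_iff_zmod _).1 hOI, (even_iff_zmod _).1 (Nat.not_odd_iff_even.1 hOJ)]
        decide
      obtain ⟨l, hl, _, hLIeq⟩ := LD_swap_shape hn hIc hJc heps
      obtain ⟨hmem, heq⟩ := swap_transport hu.1 hn huI huJ hl hLIeq
      exact ⟨u.symm l, hmem, heq⟩
    · -- I even, J odd: swap
      right
      have heps : (((I.filter (fun i : Fin (2*n) => n ≤ (i:ℕ))).card : ℕ) : ZMod 2)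
          = (((J.filter (fun i : Fin (2*n) => n ≤ (i:ℕ))).card : ℕ) : ZMod 2) + 1 := by
        rw [(odd_iff_zmod _).1 hOJ, (even_iff_zmod _).1 (Nat.not_odd_iff_even.1 hOI)]
        decide
      obtain ⟨l, hl, _, hLIeq⟩ := LD_swap_shape hn hIc hJc heps
      obtain ⟨hmem, heq⟩ := swap_transport hu.1 hn huI huJ hl hLIeq
      exact ⟨u.symm l, hmem, heq⟩
    · -- both even
      left
      apply Finset.image_injective u.injective
      rw [huI, huJ]
      unfold LD
      rw [if_neg (fun h => hOI h.2), if_neg (fun h => hOJ h.2), hIc, hJc]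
  · intro h
    rcases h with rfl | ⟨j, hj, hIdef⟩
    · obtain ⟨u, hu, huI, huJ⟩ := exists_u_subset hn hIsgn hIsgn (subset_refl I) (by omega)
      exact mem_inter_of_vertex hn hu huI huJ
    · obtain ⟨u, hu, huI, huJ⟩ := exists_u_swap hn hJsgn hJc hj hIdef hIsgn
      exact mem_inter_of_vertex hn hu huI huJ

end WeightD

open WeightD in
/-- Lemma D.2 (intersections of facets, type D). -/
theorem statement18 (n : ℕ) (hn : 3 ≤ n) (a : Fin (2 * n) → ℝ) (haE : a ∈ E n)
    (hmono : ∀ i j : Fin (2 * n), (i : ℕ) < (j : ℕ) → (j : ℕ) < n → a i < a j)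
    (haneg : ∀ i : Fin (2 * n), (i : ℕ) < n → a i < 0)
    (I J : Finset (Fin (2 * n)))
    (hIsgn : Signed n I) (hIcard : I.card ≠ n - 1)
    (hJsgn : Signed n J) (hJcard : J.card ≠ n - 1) :
    ((I.card ≠ n ∨ J.card ≠ n) →
      ((FD n hn a I ∩ FD n hn a J).Nonempty ↔ I ⊆ J ∨ J ⊆ I)) ∧
    ((I.card = n ∧ J.card = n) →
      ((FD n hn a I ∩ FD n hn a J).Nonempty ↔
        I = J ∨ ∃ j ∈ J, I = insert j.rev (J.erase j))) ∧
    (FD n hn a I ∩ FD n hn a J = ∅ ↔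
      ¬ I ⊆ J ∧ ¬ J ⊆ I ∧ (I ∩ J).card ≤ n - 2) := by
  have hA := amono_all haE hmono haneg
  have hIle := signed_card_le hIsgn
  have hJle := signed_card_le hJsgn
  refine ⟨fun h => part1 hn hA hIsgn hIcard hJsgn hJcard h,
    fun h => part2 hn hA hIsgn hJsgn h.1 h.2, ?_⟩
  rw [← Set.not_nonempty_iff_eq_empty]
  by_cases hc : I.card = n ∧ J.card = n
  · rw [part2 hn hA hIsgn hJsgn hc.1 hc.2]
    constructor
    · intro hno
      push_neg at hno
      obtain ⟨hIJne, hswap⟩ := hno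
      have hnsubIJ : ¬ I ⊆ J := fun h =>
        hIJne (Finset.eq_of_subset_of_card_le h (by omega))
      have hnsubJI : ¬ J ⊆ I := fun h =>
        hIJne (Finset.eq_of_subset_of_card_le h (by omega)).symm
      refine ⟨hnsubIJ, hnsubJI, ?_⟩
      by_contra hcard
      push_neg at hcard
      have hle : (I ∩ J).card ≤ n :=
        le_trans (Finset.card_le_card Finset.inter_subset_left) (le_of_eq hc.1)
      have hcases : (I ∩ J).card = n - 1 ∨ (I ∩ J).card = n := by omega
      rcases hcases with hcc | hcc
      · obtain ⟨y, hyJ, hyI⟩ : ∃ y ∈ J, y ∉ I := by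
          by_contra h
          push_neg at h
          exact hnsubJI h
        have hyIJ : y ∉ I ∩ J := fun h => hyI (Finset.mem_inter.1 h).1
        have hrevyI : y.rev ∈ I := by
          rcases signed_full_pair hIsgn hc.1 y with h | h
          · exact absurd h hyI
          · exact h
        have h1 : I ∩ J ⊆ J.erase y := by
          intro x hx
          rw [Finset.mem_erase]
          exact ⟨fun he => hyIJ (he ▸ hx), (Finset.mem_inter.1 hx).2⟩
        have h2 : I ∩ J = J.erase y :=
          Finset.eq_of_subset_of_card_le h1
            (by rw [Finset.card_erase_of_mem hyJ, hc.2]; omega)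
        have h3 : insert y.rev (J.erase y) ⊆ I := by
          intro x hx
          rcases Finset.mem_insert.1 hx with rfl | hx'
          · exact hrevyI
          · rw [← h2] at hx'
            exact (Finset.mem_inter.1 hx').1
        have hrevy : y.rev ∉ J.erase y :=
          fun h => (rev_not_mem hJsgn hyJ) (Finset.mem_of_mem_erase h)
        have h4 : insert y.rev (J.erase y) = I := by
          apply Finset.eq_of_subset_of_card_le h3
          rw [Finset.card_insert_of_notMem hrevy, Finset.card_erase_of_mem hyJ,
            hc.2, hc.1]
          omega
        exact hswap y hyJ h4.symm
      · have hIJeq : I ∩ J = I :=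
          Finset.eq_of_subset_of_card_le Finset.inter_subset_left (by omega)
        exact hnsubIJ (fun x hx => (Finset.mem_inter.1 (hIJeq ▸ hx)).2)
    · rintro ⟨h1, h2, h3⟩ (rfl | ⟨j, hj, hIdef⟩)
      · exact h1 (subset_refl _)
      · have hsub : J.erase j ⊆ I ∩ J := by
          intro x hx
          rw [Finset.mem_inter]
          exact ⟨hIdef ▸ Finset.mem_insert_of_mem hx, Finset.mem_of_mem_erase hx⟩
        have := Finset.card_le_card hsub
        rw [Finset.card_erase_of_mem hj, hc.2] at this
        omega
  · rw [part1 hn hA hIsgn hIcard hJsgn hJcard (not_and_or.1 hc)]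
    constructor
    · intro hno
      rw [not_or] at hno
      refine ⟨hno.1, hno.2, ?_⟩
      rcases not_and_or.1 hc with h | h
      · calc (I ∩ J).card ≤ I.card := Finset.card_le_card Finset.inter_subset_left
          _ ≤ n - 2 := by omega
      · calc (I ∩ J).card ≤ J.card := Finset.card_le_card Finset.inter_subset_right
          _ ≤ n - 2 := by omega
    · rintro ⟨h1, h2, _⟩ (h | h)
      · exact h1 h
      · exact h2 h
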